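/- For all partitions λ, μ and all u ∈ ℂ, the Nekrasov factor satisfies the conjugation symmetry N_{λ,μ}(u) = N_{μ',λ'}(u), where λ' denotes the conjugate (transposed) partition. -/

import Mathlib

open Finset

noncomputable section

/-- The `i`-th part (0-indexed) of a partition given as a list of parts. -/
def part (l : List ℕ) (i : ℕ) : ℕ := l.getD i 0

/-- The `j`-th column length (0-indexed), i.e. λ'_{j+1} = #{i : λ_i ≥ j+1}. -/
def conjPart (l : List ℕ) (j : ℕ) : ℕ := (l.filter (fun p => j < p)).length

/-- A list of naturals represents a partition: weakly decreasing with positive parts. -/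
def IsPartition (l : List ℕ) : Prop := l.Pairwise (· ≥ ·) ∧ ∀ p ∈ l, 0 < p

/-- The Nekrasov factor N_{λ,μ}(u) =
  ∏_{(i,j)∈λ}(1 - q^{-ℓ_λ(i,j)-a_μ(i,j)-1} u) · ∏_{(i,j)∈μ}(1 - q^{ℓ_μ(i,j)+a_λ(i,j)+1} u),
  with cells 0-indexed: arm a_μ(i,j) = μ_{i+1} - (j+1), leg ℓ_λ(i,j) = λ'_{j+1} - (i+1). -/
def nek (q u : ℂ) (lam mu : List ℕ) : ℂ :=
  (∏ i ∈ Finset.range lam.length, ∏ j ∈ Finset.range (part lam i),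
    (1 - q ^ (-((conjPart lam j : ℤ) - ((i : ℤ) + 1)) - ((part mu i : ℤ) - ((j : ℤ) + 1)) - 1) * u)) *
  (∏ i ∈ Finset.range mu.length, ∏ j ∈ Finset.range (part mu i),
    (1 - q ^ (((conjPart mu j : ℤ) - ((i : ℤ) + 1)) + ((part lam i : ℤ) - ((j : ℤ) + 1)) + 1) * u))

/-- λ̄ : all parts decreased by 1, zero parts dropped. -/
def bar (l : List ℕ) : List ℕ := (l.map (fun p => p - 1)).filter (fun p => 0 < p)

/-- r_n(λ) = (λ_1+1, …, λ_n+1, λ_{n+2}, λ_{n+3}, …). -/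
def rn (n : ℕ) (l : List ℕ) : List ℕ :=
  ((List.range n).map (fun i => part l i + 1)) ++ l.drop (n + 1)

/-- The conjugate (transposed) partition as a list. -/
def conjList (l : List ℕ) : List ℕ :=
  (List.range (part l 0)).map (fun j => conjPart l j)

end

/-!
Index rows and columns from `0`. The particles `p_λ(a) = λ_a - a - 1` and the holes
`h_λ(b) = b - λ'_b` of the Maya diagram of `λ` enumerate complementary subsets of `ℤ`, and `(a, b)`
is a cell of `λ` iff `h_λ(b) < p_λ(a)`. In these coordinates the factors of `N_{λ,μ}` carry the
exponent `h_λ(b) - p_μ(a)` over the cells of `λ` and `p_λ(a) - h_μ(b)` over the cells of `μ`; as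
conjugation turns `p_λ` into `-h_λ - 1` and `h_λ` into `-p_λ - 1`, `N_{μ',λ'}` carries the same two
exponents with the cell sets of `λ` and `μ` exchanged. Over `λ ∩ μ` this changes nothing. Over
`λ \ μ` both exponents take every value `t` equally often: they count the down- and the up-steps
across level `max 0 (-t)` of the walk `z ↦ #{a | p_λ(a) ≥ z + t} - #{a | p_μ(a) ≥ z}`, which starts
at `-t` and ends at `0`, both at or below that level. Over `μ \ λ` the same holds with `λ` and `μ`
exchanged.
-/

lemma prod_comp_eq_of_card_fiber_eq {α β M : Type*} [DecidableEq β] [CommMonoid M]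
    {s : Finset α} {g h : α → β} (hgh : ∀ t, #{x ∈ s | g x = t} = #{x ∈ s | h x = t})
    (F : β → M) : ∏ x ∈ s, F (g x) = ∏ x ∈ s, F (h x) := by
  have hmap : s.val.map g = s.val.map h := Multiset.ext.mpr fun t => by
    simp only [Multiset.count_map, eq_comm (a := t)]
    exact hgh t
  calc ∏ x ∈ s, F (g x) = ((s.val.map g).map F).prod := by rw [Multiset.map_map]; rfl
    _ = ∏ x ∈ s, F (h x) := by rw [hmap, Multiset.map_map]; rfl

lemma card_up_steps_eq_card_down_steps (f : ℤ → ℤ) (c : ℤ)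
    (hf : ∀ z, f z - 1 ≤ f (z + 1) ∧ f (z + 1) ≤ f z + 1) {L R : ℤ} (hLR : L ≤ R)
    (hL : f L ≤ c) (hR : f R ≤ c) :
    #{z ∈ Ico L R | f (z + 1) = f z + 1 ∧ c ≤ f z} =
      #{z ∈ Ico L R | f (z + 1) = f z - 1 ∧ c < f z} := by
  -- `max (f z - c) 0` rises with every counted up-step and falls with every counted down-step.
  suffices h : ∀ R, L ≤ R → (#{z ∈ Ico L R | f (z + 1) = f z + 1 ∧ c ≤ f z} : ℤ) +
      max (f L - c) 0 = #{z ∈ Ico L R | f (z + 1) = f z - 1 ∧ c < f z} + max (f R - c) 0 by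
    have := h R hLR
    omega
  intro R hLR
  induction R, hLR using Int.leInduction with
  | base => simp
  | succ R hLR ih =>
    have := hf R
    rw [← insert_Ico_right_eq_Ico_add_one hLR, filter_insert, filter_insert]
    split_ifs <;> (try rw [card_insert_of_notMem (by simp)]) <;> push_cast <;> omega

section Partitions

variable {l : List ℕ}

lemma part_eq_zero_of_length_le {a : ℕ} (h : l.length ≤ a) : part l a = 0 := by
  simp [part, List.getD_eq_getElem?_getD, List.getElem?_eq_none h]

lemma antitone_part (hl : l.Pairwise (· ≥ ·)) : Antitone (part l) := by
  intro i j hij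
  rcases lt_or_ge j l.length with hj | hj
  · rw [part, part, List.getD_eq_getElem l 0 hj, List.getD_eq_getElem l 0 (hij.trans_lt hj)]
    exact hl.rel_get_of_le (a := ⟨i, hij.trans_lt hj⟩) (b := ⟨j, hj⟩) hij
  · simp [part_eq_zero_of_length_le hj]

lemma conjPart_eq_zero_of_forall_le {b : ℕ} (h : ∀ p ∈ l, p ≤ b) : conjPart l b = 0 := by
  simpa [conjPart] using fun p hp => h p hp

lemma lt_conjPart_iff (hl : l.Pairwise (· ≥ ·)) {a b : ℕ} :
    a < conjPart l b ↔ b < part l a := by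
  induction l generalizing a with
  | nil => simp [conjPart, part]
  | cons x xs ih =>
    obtain ⟨hx, hxs⟩ := List.pairwise_cons.mp hl
    by_cases hb : b < x
    · have hc : conjPart (x :: xs) b = conjPart xs b + 1 := by simp [conjPart, hb]
      cases a with
      | zero => exact iff_of_true (by omega) hb
      | succ a => rw [hc, Nat.add_lt_add_iff_right]; exact ih hxs
    · have hc : conjPart (x :: xs) b = 0 :=
        conjPart_eq_zero_of_forall_le fun p hp => by
          rcases List.mem_cons.mp hp with rfl | hp
          · omega
          · have := hx p hp; omega
      have : part (x :: xs) a ≤ x := antitone_part hl (Nat.zero_le a)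
      simp only [hc, Nat.not_lt_zero, false_iff]
      omega

lemma antitone_conjPart (l : List ℕ) : Antitone (conjPart l) := by
  intro b b' h
  refine (List.monotone_filter_right l fun p hp => ?_).length_le
  simp only [decide_eq_true_eq] at hp ⊢
  omega

lemma pairwise_conjList (l : List ℕ) : (conjList l).Pairwise (· ≥ ·) := by
  rw [conjList, List.pairwise_map]
  exact List.pairwise_lt_range.imp fun h => antitone_conjPart l h.le

lemma part_conjList (hl : l.Pairwise (· ≥ ·)) (a : ℕ) : part (conjList l) a = conjPart l a := by
  rcases lt_or_ge a (part l 0) with h | h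
  · rw [part, conjList, List.getD_eq_getElem _ 0 (by simpa using h)]
    simp
  · rw [part_eq_zero_of_length_le (by simpa [conjList] using h)]
    exact (Nat.eq_zero_of_not_pos ((lt_conjPart_iff hl).not.mpr (by omega))).symm

lemma conjPart_conjList (hl : l.Pairwise (· ≥ ·)) (b : ℕ) : conjPart (conjList l) b = part l b :=
  eq_of_forall_lt_iff fun a => by
    rw [lt_conjPart_iff (pairwise_conjList l), part_conjList hl, lt_conjPart_iff hl]

end Partitions

section Maya

variable {l : List ℕ}

def particle (l : List ℕ) (a : ℕ) : ℤ := part l a - a - 1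

def hole (l : List ℕ) (b : ℕ) : ℤ := b - conjPart l b

lemma strictAnti_particle (hl : l.Pairwise (· ≥ ·)) : StrictAnti (particle l) := by
  intro a a' h
  have := antitone_part hl h.le
  simp only [particle]
  omega

lemma strictMono_hole (l : List ℕ) : StrictMono (hole l) := by
  intro b b' h
  have := antitone_conjPart l h.le
  simp only [hole]
  omega

lemma hole_lt_particle_iff (hl : l.Pairwise (· ≥ ·)) {a b : ℕ} :
    hole l b < particle l a ↔ b < part l a := by
  have := lt_conjPart_iff hl (a := a) (b := b)
  simp only [hole, particle]
  omega

lemma hole_le_particle_iff (hl : l.Pairwise (· ≥ ·)) {a b : ℕ} :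
    hole l b ≤ particle l a ↔ b < part l a := by
  have := lt_conjPart_iff hl (a := a) (b := b)
  simp only [hole, particle]
  omega

lemma particle_conjList (hl : l.Pairwise (· ≥ ·)) (a : ℕ) :
    particle (conjList l) a = -hole l a - 1 := by
  simp only [particle, hole, part_conjList hl]
  ring

lemma hole_conjList (hl : l.Pairwise (· ≥ ·)) (b : ℕ) :
    hole (conjList l) b = -particle l b - 1 := by
  simp only [particle, hole, conjPart_conjList hl]
  ring

lemma exists_particle_lt (l : List ℕ) (z : ℤ) : ∃ a, particle l a < z :=
  ⟨l.length + z.natAbs, by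
    simp only [particle, part_eq_zero_of_length_le (Nat.le_add_right _ _)]
    omega⟩

def particlesAbove (l : List ℕ) (z : ℤ) : ℕ := Nat.find (exists_particle_lt l z)

lemma lt_particlesAbove_iff (hl : l.Pairwise (· ≥ ·)) {a : ℕ} {z : ℤ} :
    a < particlesAbove l z ↔ z ≤ particle l a := by
  simp only [particlesAbove, Nat.lt_find_iff, not_lt]
  exact ⟨fun h => h a le_rfl, fun h a' ha' => h.trans ((strictAnti_particle hl).antitone ha')⟩

lemma particlesAbove_particle (hl : l.Pairwise (· ≥ ·)) (a : ℕ) :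
    particlesAbove l (particle l a) = a + 1 :=
  eq_of_forall_lt_iff fun a' => by
    rw [lt_particlesAbove_iff hl, (strictAnti_particle hl).le_iff_ge, Nat.lt_succ_iff]

lemma particlesAbove_particle_add_one (hl : l.Pairwise (· ≥ ·)) (a : ℕ) :
    particlesAbove l (particle l a + 1) = a :=
  eq_of_forall_lt_iff fun a' => by
    rw [lt_particlesAbove_iff hl, Int.add_one_le_iff, (strictAnti_particle hl).lt_iff_gt]

lemma particlesAbove_hole (hl : l.Pairwise (· ≥ ·)) (b : ℕ) :
    particlesAbove l (hole l b) = conjPart l b :=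
  eq_of_forall_lt_iff fun a => by
    rw [lt_particlesAbove_iff hl, hole_le_particle_iff hl, lt_conjPart_iff hl]

lemma particlesAbove_hole_add_one (hl : l.Pairwise (· ≥ ·)) (b : ℕ) :
    particlesAbove l (hole l b + 1) = conjPart l b :=
  eq_of_forall_lt_iff fun a => by
    rw [lt_particlesAbove_iff hl, Int.add_one_le_iff, hole_lt_particle_iff hl, lt_conjPart_iff hl]

lemma particlesAbove_eq_zero {z : ℤ} (hz : part l 0 ≤ z) : particlesAbove l z = 0 := by
  rw [particlesAbove, Nat.find_eq_zero, particle]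
  omega

lemma particlesAbove_eq_neg (hl : l.Pairwise (· ≥ ·)) {z : ℤ} (hz : z ≤ -l.length) :
    (particlesAbove l z : ℤ) = -z := by
  suffices particlesAbove l z = z.natAbs by omega
  refine eq_of_forall_lt_iff fun a => ?_
  rw [lt_particlesAbove_iff hl, particle]
  rcases lt_or_ge a l.length with ha | ha
  · omega
  · rw [part_eq_zero_of_length_le ha]
    omega

lemma particle_or_hole (hl : l.Pairwise (· ≥ ·)) (z : ℤ) :
    (∃ a, particle l a = z) ∨ ∃ b, hole l b = z := by
  set a := particlesAbove l (z + 1)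
  have ha : particle l a < z + 1 := not_le.mp ((lt_particlesAbove_iff hl).not.mp (lt_irrefl a))
  rcases (Int.lt_add_one_iff.mp ha).eq_or_lt with h | h
  · exact Or.inl ⟨a, h⟩
  right
  -- exactly `a` particles exceed `z`, so `z` is the hole of column `z + a`
  have hpa : (part l a : ℤ) ≤ z + a := by simp only [particle] at h; omega
  have hcol : conjPart l (z + a).toNat = a := eq_of_forall_lt_iff fun a' => by
    rw [lt_conjPart_iff hl]
    constructor
    · intro h'
      by_contra hle
      have := antitone_part hl (not_lt.mp hle)
      omega
    · intro h'
      have h1 : z + 1 ≤ particle l (a - 1) := (lt_particlesAbove_iff hl).mp (by omega)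
      have h2 := antitone_part hl (Nat.le_sub_one_of_lt h')
      simp only [particle] at h1
      omega
  exact ⟨(z + a).toNat, by simp only [hole, hcol]; omega⟩

lemma particlesAbove_step (hl : l.Pairwise (· ≥ ·)) (z : ℤ) :
    particlesAbove l z = particlesAbove l (z + 1) + 1 ∨
      particlesAbove l z = particlesAbove l (z + 1) := by
  rcases particle_or_hole hl z with ⟨a, rfl⟩ | ⟨b, rfl⟩
  · rw [particlesAbove_particle hl, particlesAbove_particle_add_one hl]
    exact Or.inl rfl
  · rw [particlesAbove_hole hl, particlesAbove_hole_add_one hl]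
    exact Or.inr rfl

end Maya

section Cells

variable {l m : List ℕ}

def cells (l : List ℕ) : Finset (ℕ × ℕ) :=
  (range l.length ×ˢ range (part l 0)).filter fun c => c.2 < part l c.1

lemma mem_cells (hl : l.Pairwise (· ≥ ·)) {c : ℕ × ℕ} : c ∈ cells l ↔ c.2 < part l c.1 := by
  refine ⟨fun h => (mem_filter.mp h).2, fun h => mem_filter.mpr ⟨mem_product.mpr ⟨?_, ?_⟩, h⟩⟩
  · by_contra hc
    rw [part_eq_zero_of_length_le (by simpa using hc)] at h
    omega
  · exact mem_range.mpr (h.trans_le (antitone_part hl (Nat.zero_le _)))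

lemma swap_mem_cells_conjList (hl : l.Pairwise (· ≥ ·)) {c : ℕ × ℕ} :
    c.swap ∈ cells (conjList l) ↔ c ∈ cells l := by
  rw [mem_cells (pairwise_conjList l), mem_cells hl, Prod.fst_swap, Prod.snd_swap,
    part_conjList hl, lt_conjPart_iff hl]

lemma prod_cells_conjList {M : Type*} [CommMonoid M] (hl : l.Pairwise (· ≥ ·))
    (g : ℕ × ℕ → M) : ∏ c ∈ cells (conjList l), g c = ∏ c ∈ cells l, g c.swap :=
  prod_nbij' Prod.swap Prod.swap (fun c hc => (swap_mem_cells_conjList hl).mp (by simpa using hc))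
    (fun c hc => (swap_mem_cells_conjList hl).mpr hc) (fun _ _ => rfl) (fun _ _ => rfl)
    (fun _ _ => rfl)

lemma prod_cells {M : Type*} [CommMonoid M] (hl : l.Pairwise (· ≥ ·)) (g : ℕ → ℕ → M) :
    ∏ i ∈ range l.length, ∏ j ∈ range (part l i), g i j = ∏ c ∈ cells l, g c.1 c.2 := by
  refine (prod_finset_product (cells l) _ _ (f := fun c => g c.1 c.2) fun c => ?_).symm
  rw [mem_cells hl, mem_range, mem_range]
  refine ⟨fun h => ⟨?_, h⟩, And.right⟩
  by_contra hc
  rw [part_eq_zero_of_length_le (not_lt.mp hc)] at h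
  omega

lemma nek_eq_prod_cells (hl : l.Pairwise (· ≥ ·)) (hm : m.Pairwise (· ≥ ·)) (q u : ℂ) :
    nek q u l m = (∏ c ∈ cells l, (1 - q ^ (hole l c.2 - particle m c.1) * u)) *
      ∏ c ∈ cells m, (1 - q ^ (particle l c.1 - hole m c.2) * u) := by
  rw [nek, prod_cells hl, prod_cells hm]
  congr 1 <;> refine prod_congr rfl fun c _ => ?_ <;> simp only [hole, particle] <;> ring_nf

lemma nek_conjList_eq_prod_cells (hl : l.Pairwise (· ≥ ·)) (hm : m.Pairwise (· ≥ ·)) (q u : ℂ) :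
    nek q u (conjList m) (conjList l) =
      (∏ c ∈ cells m, (1 - q ^ (hole l c.2 - particle m c.1) * u)) *
        ∏ c ∈ cells l, (1 - q ^ (particle l c.1 - hole m c.2) * u) := by
  rw [nek_eq_prod_cells (pairwise_conjList m) (pairwise_conjList l), prod_cells_conjList hm,
    prod_cells_conjList hl]
  congr 1 <;> refine prod_congr rfl fun c _ => ?_ <;>
    simp only [Prod.fst_swap, Prod.snd_swap, particle_conjList hl, particle_conjList hm,
      hole_conjList hl, hole_conjList hm] <;> ring_nf

end Cells

section SkewWalk

variable {l m : List ℕ}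

lemma particlesAbove_of_particle_eq (hl : l.Pairwise (· ≥ ·)) {a : ℕ} {z : ℤ}
    (h : particle l a = z) : particlesAbove l z = a + 1 ∧ particlesAbove l (z + 1) = a := by
  subst h
  exact ⟨particlesAbove_particle hl a, particlesAbove_particle_add_one hl a⟩

lemma particlesAbove_of_hole_eq (hl : l.Pairwise (· ≥ ·)) {b : ℕ} {z : ℤ}
    (h : hole l b = z) :
    particlesAbove l z = conjPart l b ∧ particlesAbove l (z + 1) = conjPart l b := by
  subst h
  exact ⟨particlesAbove_hole hl b, particlesAbove_hole_add_one hl b⟩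

lemma conjPart_le_length (l : List ℕ) (b : ℕ) : conjPart l b ≤ l.length :=
  List.length_filter_le _ _

lemma neg_length_le_hole (l : List ℕ) (b : ℕ) : -(l.length : ℤ) ≤ hole l b := by
  have := conjPart_le_length l b
  simp only [hole]
  omega

def skewWalk (l m : List ℕ) (t z : ℤ) : ℤ := particlesAbove l (z + t) - particlesAbove m z

lemma skewWalk_add_one (l m : List ℕ) (t z : ℤ) :
    skewWalk l m t (z + 1) = particlesAbove l (z + t + 1) - particlesAbove m (z + 1) := by
  rw [skewWalk, add_right_comm]

lemma skewWalk_step_cases (hl : l.Pairwise (· ≥ ·)) (hm : m.Pairwise (· ≥ ·)) (t z : ℤ) :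
    (skewWalk l m t (z + 1) = skewWalk l m t z - 1 →
      (∃ a, particle l a = z + t) ∧ ∃ b, hole m b = z) ∧
    (skewWalk l m t (z + 1) = skewWalk l m t z + 1 →
      (∃ b, hole l b = z + t) ∧ ∃ a, particle m a = z) := by
  rw [skewWalk_add_one, skewWalk]
  rcases particle_or_hole hl (z + t) with ⟨a, ha⟩ | ⟨b, hb⟩ <;>
    rcases particle_or_hole hm z with ⟨a', ha'⟩ | ⟨b', hb'⟩
  · have := particlesAbove_of_particle_eq hl ha
    have := particlesAbove_of_particle_eq hm ha'
    exact ⟨fun _ => by omega, fun _ => by omega⟩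
  · have := particlesAbove_of_particle_eq hl ha
    have := particlesAbove_of_hole_eq hm hb'
    exact ⟨fun _ => ⟨⟨a, ha⟩, b', hb'⟩, fun _ => by omega⟩
  · have := particlesAbove_of_hole_eq hl hb
    have := particlesAbove_of_particle_eq hm ha'
    exact ⟨fun _ => by omega, fun _ => ⟨⟨b, hb⟩, a', ha'⟩⟩
  · have := particlesAbove_of_hole_eq hl hb
    have := particlesAbove_of_hole_eq hm hb'
    exact ⟨fun _ => by omega, fun _ => by omega⟩

lemma card_fiber_particle_sub_hole_eq_card_down_steps (hl : l.Pairwise (· ≥ ·))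
    (hm : m.Pairwise (· ≥ ·)) (t : ℤ) {L R : ℤ} (hL : L ≤ -m.length) (hR : part l 0 ≤ R) :
    #{c ∈ cells l \ cells m | particle l c.1 - hole m c.2 = t} =
      #{z ∈ Ico L R | skewWalk l m t (z + 1) = skewWalk l m t z - 1 ∧
        max 0 (-t) < skewWalk l m t z} := by
  refine card_nbij (fun c => hole m c.2) ?_ ?_ ?_
  · rintro ⟨a, b⟩ hc
    simp only [mem_coe, mem_filter, mem_sdiff, mem_cells hl, mem_cells hm] at hc
    obtain ⟨⟨hbl, hbm⟩, ht⟩ := hc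
    obtain ⟨hl1, hl2⟩ := particlesAbove_of_particle_eq hl (a := a) (z := hole m b + t) (by omega)
    obtain ⟨hm1, hm2⟩ := particlesAbove_of_hole_eq hm (rfl : hole m b = _)
    have := (lt_conjPart_iff hm).not.mpr hbm
    have := neg_length_le_hole m b
    have := antitone_part hl (Nat.zero_le a)
    have : hole m b = b - conjPart m b := rfl
    simp only [particle] at ht
    show hole m b ∈ _
    rw [mem_coe, mem_filter, mem_Ico, skewWalk_add_one, skewWalk]
    exact ⟨⟨by omega, by omega⟩, by omega, max_lt (by omega) (by omega)⟩
  · rintro ⟨a, b⟩ hc ⟨a', b'⟩ hc' (h : hole m b = hole m b')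
    simp only [mem_coe, mem_filter] at hc hc'
    obtain rfl := (strictMono_hole m).injective h
    obtain rfl := (strictAnti_particle hl).injective (by omega : particle l a = particle l a')
    rfl
  · intro z hz
    rw [mem_coe, mem_filter, mem_Ico] at hz
    obtain ⟨⟨a, ha⟩, b, hb⟩ := (skewWalk_step_cases hl hm t z).1 hz.2.1
    obtain ⟨hl1, hl2⟩ := particlesAbove_of_particle_eq hl ha
    obtain ⟨hm1, hm2⟩ := particlesAbove_of_hole_eq hm hb
    simp only [skewWalk] at hz
    refine ⟨(a, b), ?_, hb⟩
    have hbm : ¬ b < part m a := (lt_conjPart_iff hm).not.mp (by omega)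
    have hbl : b < part l a := by simp only [particle, hole] at ha hb; omega
    simp only [mem_coe, mem_filter, mem_sdiff, mem_cells hl, mem_cells hm]
    exact ⟨⟨hbl, hbm⟩, by omega⟩

lemma card_fiber_hole_sub_particle_eq_card_up_steps (hl : l.Pairwise (· ≥ ·))
    (hm : m.Pairwise (· ≥ ·)) (t : ℤ) {L R : ℤ} (hL : L ≤ -l.length) (hR : part m 0 ≤ R) :
    #{c ∈ cells l \ cells m | hole l c.2 - particle m c.1 = t} =
      #{z ∈ Ico L R | skewWalk l m t (z + 1) = skewWalk l m t z + 1 ∧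
        max 0 (-t) ≤ skewWalk l m t z} := by
  refine card_nbij (fun c => particle m c.1) ?_ ?_ ?_
  · rintro ⟨a, b⟩ hc
    simp only [mem_coe, mem_filter, mem_sdiff, mem_cells hl, mem_cells hm] at hc
    obtain ⟨⟨hbl, hbm⟩, ht⟩ := hc
    obtain ⟨hl1, hl2⟩ := particlesAbove_of_hole_eq hl (b := b) (z := particle m a + t) (by omega)
    obtain ⟨hm1, hm2⟩ := particlesAbove_of_particle_eq hm (rfl : particle m a = _)
    have := (lt_conjPart_iff hl).mpr hbl
    have := conjPart_le_length l b
    have := antitone_part hm (Nat.zero_le a)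
    have : particle m a = part m a - a - 1 := rfl
    simp only [hole] at ht
    show particle m a ∈ _
    rw [mem_coe, mem_filter, mem_Ico, skewWalk_add_one, skewWalk]
    exact ⟨⟨by omega, by omega⟩, by omega, max_le (by omega) (by omega)⟩
  · rintro ⟨a, b⟩ hc ⟨a', b'⟩ hc' (h : particle m a = particle m a')
    simp only [mem_coe, mem_filter] at hc hc'
    obtain rfl := (strictAnti_particle hm).injective h
    obtain rfl := (strictMono_hole l).injective (by omega : hole l b = hole l b')
    rfl
  · intro z hz
    rw [mem_coe, mem_filter, mem_Ico] at hz
    obtain ⟨⟨b, hb⟩, a, ha⟩ := (skewWalk_step_cases hl hm t z).2 hz.2.1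
    obtain ⟨hl1, hl2⟩ := particlesAbove_of_hole_eq hl hb
    obtain ⟨hm1, hm2⟩ := particlesAbove_of_particle_eq hm ha
    simp only [skewWalk] at hz
    refine ⟨(a, b), ?_, ha⟩
    have hbl : b < part l a := (lt_conjPart_iff hl).mp (by omega)
    have hbm : ¬ b < part m a := by simp only [particle, hole] at ha hb; omega
    simp only [mem_coe, mem_filter, mem_sdiff, mem_cells hl, mem_cells hm]
    exact ⟨⟨hbl, hbm⟩, by omega⟩

end SkewWalk

section Symmetry

variable {l m : List ℕ}

lemma card_fiber_particle_sub_hole_eq_card_fiber_hole_sub_particle (hl : l.Pairwise (· ≥ ·))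
    (hm : m.Pairwise (· ≥ ·)) (t : ℤ) :
    #{c ∈ cells l \ cells m | particle l c.1 - hole m c.2 = t} =
      #{c ∈ cells l \ cells m | hole l c.2 - particle m c.1 = t} := by
  set L : ℤ := -(l.length + m.length + |t|)
  set R : ℤ := part l 0 + part m 0 + |t|
  obtain ⟨ht₁, ht₂⟩ := abs_le.mp (le_refl |t|)
  have hstep : ∀ z, skewWalk l m t z - 1 ≤ skewWalk l m t (z + 1) ∧
      skewWalk l m t (z + 1) ≤ skewWalk l m t z + 1 := fun z => by
    rw [skewWalk_add_one, skewWalk]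
    rcases particlesAbove_step hl (z + t) with h | h <;>
      rcases particlesAbove_step hm z with h' | h' <;> omega
  have hL : skewWalk l m t L = -t := by
    rw [skewWalk, particlesAbove_eq_neg hl (by omega), particlesAbove_eq_neg hm (by omega)]
    ring
  have hR : skewWalk l m t R = 0 := by
    rw [skewWalk, particlesAbove_eq_zero (by omega), particlesAbove_eq_zero (by omega)]
    rfl
  rw [card_fiber_particle_sub_hole_eq_card_down_steps hl hm t (L := L) (R := R) (by omega)
      (by omega), card_fiber_hole_sub_particle_eq_card_up_steps hl hm t (L := L) (R := R) (by omega)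
      (by omega)]
  exact (card_up_steps_eq_card_down_steps _ _ hstep (L := L) (R := R) (by omega)
    (by rw [hL]; exact le_max_right _ _) (by rw [hR]; exact le_max_left _ _)).symm

lemma prod_sdiff_cells_particle_sub_hole {M : Type*} [CommMonoid M] (hl : l.Pairwise (· ≥ ·))
    (hm : m.Pairwise (· ≥ ·)) (F : ℤ → M) :
    ∏ c ∈ cells l \ cells m, F (particle l c.1 - hole m c.2) =
      ∏ c ∈ cells l \ cells m, F (hole l c.2 - particle m c.1) :=
  prod_comp_eq_of_card_fiber_eq
    (card_fiber_particle_sub_hole_eq_card_fiber_hole_sub_particle hl hm) F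

lemma prod_cells_mul_prod_cells_comm {M : Type*} [CommMonoid M] (hl : l.Pairwise (· ≥ ·))
    (hm : m.Pairwise (· ≥ ·)) (F : ℤ → M) :
    (∏ c ∈ cells l, F (hole l c.2 - particle m c.1)) *
        ∏ c ∈ cells m, F (particle l c.1 - hole m c.2) =
      (∏ c ∈ cells m, F (hole l c.2 - particle m c.1)) *
        ∏ c ∈ cells l, F (particle l c.1 - hole m c.2) := by
  have hlm := prod_sdiff_cells_particle_sub_hole hl hm F
  have hml := prod_sdiff_cells_particle_sub_hole hm hl fun t => F (-t)
  simp only [neg_sub] at hml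
  simp only [← prod_inter_mul_prod_sdiff (cells l) (cells m),
    ← prod_inter_mul_prod_sdiff (cells m) (cells l), inter_comm (cells m), ← hlm, hml]
  ac_rfl

end Symmetry

theorem stmt6_general (q : ℂ)
    (lam mu : List ℕ) (hlam : IsPartition lam) (hmu : IsPartition mu) (u : ℂ) :
    nek q u lam mu = nek q u (conjList mu) (conjList lam) := by
  rw [nek_eq_prod_cells hlam.1 hmu.1, nek_conjList_eq_prod_cells hlam.1 hmu.1]
  exact prod_cells_mul_prod_cells_comm hlam.1 hmu.1 fun t => 1 - q ^ t * u

theorem stmt6 (q : ℂ) (hq : q ≠ 0)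
    (lam mu : List ℕ) (hlam : IsPartition lam) (hmu : IsPartition mu) (u : ℂ) :
    nek q u lam mu = nek q u (conjList mu) (conjList lam) :=
  stmt6_general q lam mu hlam hmu u
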